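/- Suppose h is a homogeneity structure on a set P (action of the multiplicative monoid (ℝ,·)) and G a group acting on P on the right, such that h_t(p·g) = h_t(p)·g for all t ∈ ℝ, p ∈ P, g ∈ G. Then P₀ = h₀(P) is G-invariant, and the map P → M ×_{M₀} P₀, p ↦ (π(p), h₀(p)) — where M = P/G, M₀ = P₀/G and π : P → M is the quotient map — is a well-defined G-equivariant bijection onto the fibered product {(x, p₀) : h₀^M(x) = π₀(p₀)}, where h₀^M : M → M₀ is induced by h₀. -/
import Mathlib


/-- Weighted principal bundle (set-theoretic version). If a monoid action
`h` of `(ℝ,·)` on `P` commutes with a free `G`-action, then `P₀ = h₀(P)` is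
`G`-invariant, `h₀` descends to a map `h₀^M` on `M = P/G`, the map
`p ↦ (π(p), h₀(p))` is `G`-equivariant (in the second component), and it is a
bijection onto the fibered product `{(x,p₀) : p₀ ∈ P₀, h₀^M(x) = π(p₀)}`. -/
theorem stmt18 (G P : Type*) [Group G] [MulAction G P]
    (h : ℝ → P → P) (h1 : h 1 = id) (hcomp : ∀ t s : ℝ, h t ∘ h s = h (t * s))
    (hequiv : ∀ (t : ℝ) (g : G) (p : P), h t (g • p) = g • h t p)
    (hfree : ∀ (g : G) (p : P), g • p = p → g = 1) :
    (∀ g : G, ∀ p ∈ Set.range (h 0), g • p ∈ Set.range (h 0)) ∧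
    ∃ hM : Quotient (MulAction.orbitRel G P) → Quotient (MulAction.orbitRel G P),
      (∀ p : P, hM (Quotient.mk (MulAction.orbitRel G P) p)
          = Quotient.mk (MulAction.orbitRel G P) (h 0 p)) ∧
      (∀ (g : G) (p : P),
        (Quotient.mk (MulAction.orbitRel G P) (g • p), h 0 (g • p)) =
          (Quotient.mk (MulAction.orbitRel G P) p, g • h 0 p)) ∧
      Set.BijOn (fun p : P => (Quotient.mk (MulAction.orbitRel G P) p, h 0 p))
        Set.univ
        {q : Quotient (MulAction.orbitRel G P) × P |
          q.2 ∈ Set.range (h 0) ∧ hM q.1 = Quotient.mk (MulAction.orbitRel G P) q.2} := by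
  have hidem : ∀ p : P, h 0 (h 0 p) = h 0 p := by
    intro p
    have := congrFun (hcomp 0 0) p
    simpa using this
  have hMwd : ∀ a b : P, (MulAction.orbitRel G P).r a b →
      Quotient.mk (MulAction.orbitRel G P) (h 0 a)
        = Quotient.mk (MulAction.orbitRel G P) (h 0 b) := by
    intro a b hab
    obtain ⟨g, hg⟩ := hab
    apply Quotient.sound
    exact ⟨g, by simp [← hg, hequiv]⟩
  refine ⟨?_, ?_⟩
  · rintro g p ⟨q, rfl⟩
    exact ⟨g • q, (hequiv 0 g q)⟩
  · refine ⟨Quotient.lift (fun p => Quotient.mk (MulAction.orbitRel G P) (h 0 p)) hMwd,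
      fun p => rfl, fun g p => by
        simp only [Prod.mk.injEq]
        exact ⟨Quotient.sound ⟨g, rfl⟩, hequiv 0 g p⟩, ?_⟩
    refine ⟨?_, ?_, ?_⟩
    · intro p _
      refine ⟨⟨p, rfl⟩, ?_⟩
      simp
    · intro a _ b _ hab
      simp only [Prod.mk.injEq] at hab
      obtain ⟨h1', h2'⟩ := hab
      obtain ⟨g, hg⟩ := Quotient.exact h1'
      have hg' : g • b = a := hg
      have : g • h 0 b = h 0 b := by
        rw [← hequiv, hg', h2']
      have hg1 : g = 1 := hfree g _ this
      rw [← hg', hg1, one_smul]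
    · rintro ⟨x, p₀⟩ ⟨⟨r, hr⟩, hx⟩
      obtain ⟨p, rfl⟩ := Quotient.exists_rep x
      simp only [Quotient.lift_mk] at hx
      obtain ⟨g, hg⟩ := Quotient.exact hx
      refine ⟨g⁻¹ • p, Set.mem_univ _, ?_⟩
      simp only [Prod.mk.injEq]
      constructor
      · exact Quotient.sound ⟨g⁻¹, rfl⟩
      · rw [hequiv, ← hg, inv_smul_smul]
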